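/- A hypergraph H is generated by a bonding grammar BG = (Z, N, T, ⊗) if and only if there exists a bond set for H, i.e., a set B ⊆ E_H of hyperedges such that breaking the bond e for each e ∈ B yields a hypergraph of the form m·Z for some m ∈ ℕ^{|Z|}. -/

import Mathlib

/-! ## Hypergraphs (over a label alphabet `Λ`), bonding, breaking bonds,
bonding grammars, following "Bonding Grammars" (Pshenitsyn). -/

structure LabHypergraph (Λ : Type) where
  V : Finset ℕ
  E : Finset ℕ
  att : ℕ → List ℕ
  lab : ℕ → Λ

namespace LabHypergraph

variable {Λ : Type}

/-- Attachment vertices lie in `V` and attachment lengths agree with types. -/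
def WellFormed (typ : Λ → ℕ) (H : LabHypergraph Λ) : Prop :=
  (∀ e ∈ H.E, ∀ v ∈ H.att e, v ∈ H.V) ∧
  (∀ e ∈ H.E, (H.att e).length = typ (H.lab e))

def Adj (H : LabHypergraph Λ) (u v : ℕ) : Prop :=
  ∃ e ∈ H.E, u ∈ H.att e ∧ v ∈ H.att e

/-- There is a path between `u` and `v` in `H`. -/
def HasPath (H : LabHypergraph Λ) (u v : ℕ) : Prop :=
  Relation.ReflTransGen H.Adj u v

def Connected (H : LabHypergraph Λ) : Prop :=
  ∀ u ∈ H.V, ∀ v ∈ H.V, H.HasPath u v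

/-- The degree of a vertex: the number of pairs `(e, i)` with
`att e ( i ) = v`, i.e. occurrences of `v` in attachment sequences. -/
def degree (H : LabHypergraph Λ) (v : ℕ) : ℕ :=
  ∑ e ∈ H.E, (H.att e).count v

def degreeSet (H : LabHypergraph Λ) : Set ℕ :=
  {d | ∃ v ∈ H.V, H.degree v = d}

def Isomorphic (H G : LabHypergraph Λ) : Prop :=
  ∃ f g : ℕ → ℕ,
    Set.BijOn f ↑H.V ↑G.V ∧ Set.BijOn g ↑H.E ↑G.E ∧
    ∀ e ∈ H.E, G.att (g e) = (H.att e).map f ∧ G.lab (g e) = H.lab e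

end LabHypergraph

/-- A single bonding step: two distinct hyperedges `e₁, e₂` whose labels can be
bonded are merged into a single new hyperedge `e'` with concatenated
attachment sequence and label `lab e₁ ⊗ lab e₂`. -/
def BondingStep {Λ : Type} (bond : Λ → Λ → Option Λ) (H H' : LabHypergraph Λ) : Prop :=
  ∃ e₁ e₂ e' t,
    e₁ ∈ H.E ∧ e₂ ∈ H.E ∧ e₁ ≠ e₂ ∧ e' ∉ H.E ∧
    bond (H.lab e₁) (H.lab e₂) = some t ∧
    H'.V = H.V ∧
    H'.E = (H.E \ {e₁, e₂}) ∪ {e'} ∧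
    (∀ e ∈ H.E \ {e₁, e₂}, H'.att e = H.att e ∧ H'.lab e = H.lab e) ∧
    H'.att e' = H.att e₁ ++ H.att e₂ ∧
    H'.lab e' = t

/-- Breaking the bond `e'` (whose label is `A₁ ⊗ A₂`) of `H'`, introducing the
fresh hyperedges `e₁, e₂`, yields `H`. -/
def BreakBondAt {Λ : Type} (typ : Λ → ℕ) (bond : Λ → Λ → Option Λ)
    (H' H : LabHypergraph Λ) (e' e₁ e₂ : ℕ) : Prop :=
  ∃ A₁ A₂,
    e' ∈ H'.E ∧ e₁ ∉ H'.E ∧ e₂ ∉ H'.E ∧ e₁ ≠ e₂ ∧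
    bond A₁ A₂ = some (H'.lab e') ∧
    H.V = H'.V ∧
    H.E = (H'.E \ {e'}) ∪ {e₁, e₂} ∧
    (∀ e ∈ H'.E \ {e'}, H.att e = H'.att e ∧ H.lab e = H'.lab e) ∧
    H.att e₁ = (H'.att e').take (typ A₁) ∧
    H.att e₂ = (H'.att e').drop (typ A₁) ∧
    H.lab e₁ = A₁ ∧ H.lab e₂ = A₂

def BreakBond {Λ : Type} (typ : Λ → ℕ) (bond : Λ → Λ → Option Λ)
    (H' H : LabHypergraph Λ) : Prop :=
  ∃ e' e₁ e₂, BreakBondAt typ bond H' H e' e₁ e₂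

/-- `BreaksTo typ bond H l F`: starting from `H` and successively breaking the
bonds listed in `l` yields `F`. -/
def BreaksTo {Λ : Type} (typ : Λ → ℕ) (bond : Λ → Λ → Option Λ) :
    LabHypergraph Λ → List ℕ → LabHypergraph Λ → Prop
  | H, [], F => H = F
  | H, e :: l, F => ∃ H₁ e₁ e₂, BreakBondAt typ bond H H₁ e e₁ e₂ ∧ BreaksTo typ bond H₁ l F

/-- `H` is a disjoint union of copies of hypergraphs from `Zs`
(this plays the role of `m · Z`). -/
def IsUnionOfCopies {Λ : Type} (Zs : Set (LabHypergraph Λ)) (H : LabHypergraph Λ) : Prop :=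
  ∃ (n : ℕ) (cV cE : ℕ → ℕ),
    (∀ v ∈ H.V, cV v < n) ∧ (∀ e ∈ H.E, cE e < n) ∧
    (∀ e ∈ H.E, ∀ v ∈ H.att e, v ∈ H.V) ∧
    (∀ e ∈ H.E, ∀ v ∈ H.att e, cV v = cE e) ∧
    ∀ i < n, ∃ Z0 ∈ Zs, LabHypergraph.Isomorphic
      ⟨H.V.filter (fun v => cV v = i), H.E.filter (fun e => cE e = i), H.att, H.lab⟩ Z0

/-- `C` is a connected component of `H`. -/
def IsComponent {Λ : Type} (H C : LabHypergraph Λ) : Prop :=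
  C.V ⊆ H.V ∧ C.att = H.att ∧ C.lab = H.lab ∧ C.V.Nonempty ∧
  (∀ u ∈ C.V, ∀ v ∈ H.V, (H.HasPath u v ↔ v ∈ C.V)) ∧
  ∀ e, e ∈ C.E ↔ (e ∈ H.E ∧ ∃ v ∈ H.att e, v ∈ C.V)

/-- Disjoint union of two hypergraphs (via an even/odd renaming). -/
def hsum {Λ : Type} (H K : LabHypergraph Λ) : LabHypergraph Λ :=
  ⟨H.V.image (fun v => 2 * v) ∪ K.V.image (fun v => 2 * v + 1),
   H.E.image (fun e => 2 * e) ∪ K.E.image (fun e => 2 * e + 1),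
   fun e => if e % 2 = 0 then (H.att (e / 2)).map (fun v => 2 * v)
            else (K.att (e / 2)).map (fun v => 2 * v + 1),
   fun e => if e % 2 = 0 then H.lab (e / 2) else K.lab (e / 2)⟩

/-- A bonding grammar: typed labels, nonterminal and terminal alphabets, a
partial bond function, and a tuple `Z` of start hypergraphs. -/
structure BondingGrammar (Λ : Type) where
  typ : Λ → ℕ
  N : Set Λ
  T : Set Λ
  bond : Λ → Λ → Option Λ
  k : ℕ
  Z : Fin k → LabHypergraph Λ

namespace BondingGrammar

variable {Λ : Type}

/-- Side conditions from the definition of a bonding grammar: `N` and `T` are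
disjoint, the start hypergraphs are connected and well-formed, and the bond
function is a partial injective function `N × N ⇀ T` adding the types. -/
def WellFormed (G : BondingGrammar Λ) : Prop :=
  Disjoint G.N G.T ∧
  (∀ i, (G.Z i).Connected ∧ (G.Z i).WellFormed G.typ) ∧
  (∀ A₁ A₂ t, G.bond A₁ A₂ = some t →
    A₁ ∈ G.N ∧ A₂ ∈ G.N ∧ t ∈ G.T ∧ G.typ t = G.typ A₁ + G.typ A₂) ∧
  (∀ A₁ A₂ B₁ B₂ t, G.bond A₁ A₂ = some t → G.bond B₁ B₂ = some t →
    A₁ = B₁ ∧ A₂ = B₂)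

def ZSet (G : BondingGrammar Λ) : Set (LabHypergraph Λ) :=
  {Z0 | ∃ i, Z0 = G.Z i}

/-- `G` generates `H` if some `m · Z` derives `H` by bonding steps. -/
def Generates (G : BondingGrammar Λ) (H : LabHypergraph Λ) : Prop :=
  ∃ H₀, IsUnionOfCopies G.ZSet H₀ ∧
    Relation.ReflTransGen (BondingStep G.bond) H₀ H

/-- The language of `G`: generated hypergraphs all of whose labels are terminal. -/
def Lang (G : BondingGrammar Λ) : Set (LabHypergraph Λ) :=
  {H | G.Generates H ∧ ∀ e ∈ H.E, H.lab e ∈ G.T}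

end BondingGrammar

/-! Read backwards, a bonding step is the breaking of the new bond, provided the attachment
lengths of the two bonded hyperedges match their types; this holds along every derivation from
`m · Z`, since `Z` is well formed and types add up under `⊗`. So a derivation `m · Z ⇒* H` read
backwards breaks the bonds it created, which form a bond set. They are still present in `H`
because their labels are terminal, while only nonterminal hyperedges are ever bonded. -/

section Bonding

variable {Λ : Type} {typ : Λ → ℕ} {bond : Λ → Λ → Option Λ} {H H' : LabHypergraph Λ}

theorem IsUnionOfCopies.wellFormed {Zs : Set (LabHypergraph Λ)}
    (hZ : ∀ Z ∈ Zs, Z.WellFormed typ) (h : IsUnionOfCopies Zs H) : H.WellFormed typ := by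
  obtain ⟨_, _, cE, -, hcE, hattV, -, hcopy⟩ := h
  refine ⟨hattV, fun e he => ?_⟩
  obtain ⟨Z, hZs, _, g, -, hg, hiso⟩ := hcopy (cE e) (hcE e he)
  have he' : e ∈ H.E.filter (fun x => cE x = cE e) := Finset.mem_filter.2 ⟨he, rfl⟩
  obtain ⟨hatt, hlab⟩ := hiso e he'
  simpa [hatt, hlab] using (hZ Z hZs).2 (g e) (hg.mapsTo (Finset.mem_coe.2 he'))

theorem BondingStep.wellFormed
    (hadd : ∀ A₁ A₂ t, bond A₁ A₂ = some t → typ t = typ A₁ + typ A₂)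
    (hH : H.WellFormed typ) (h : BondingStep bond H H') : H'.WellFormed typ := by
  obtain ⟨e₁, e₂, e', t, he₁, he₂, -, -, hbond, hV, hE, hkeep, hatt, hlab⟩ := h
  have hedge : ∀ e ∈ H'.E,
      (∀ v ∈ H'.att e, v ∈ H'.V) ∧ (H'.att e).length = typ (H'.lab e) := by
    intro e he
    rw [hE, Finset.mem_union, Finset.mem_singleton] at he
    rcases he with he | rfl
    · rw [(hkeep e he).1, (hkeep e he).2, hV]
      exact ⟨hH.1 e (Finset.mem_sdiff.1 he).1, hH.2 e (Finset.mem_sdiff.1 he).1⟩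
    · rw [hatt, hlab, hV, List.length_append, hH.2 e₁ he₁, hH.2 e₂ he₂, hadd _ _ _ hbond]
      exact ⟨fun v hv => (List.mem_append.1 hv).elim (hH.1 e₁ he₁ v) (hH.1 e₂ he₂ v), rfl⟩
  exact ⟨fun e he => (hedge e he).1, fun e he => (hedge e he).2⟩

theorem LabHypergraph.WellFormed.reflTransGen_bondingStep
    (hadd : ∀ A₁ A₂ t, bond A₁ A₂ = some t → typ t = typ A₁ + typ A₂)
    (hH : H.WellFormed typ) (h : Relation.ReflTransGen (BondingStep bond) H H') :
    H'.WellFormed typ := by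
  induction h with
  | refl => exact hH
  | tail _ hstep ih => exact hstep.wellFormed hadd ih

theorem BondingStep.breakBond (hH : H.WellFormed typ) (h : BondingStep bond H H') :
    BreakBond typ bond H' H := by
  obtain ⟨e₁, e₂, e', t, he₁, he₂, hne, he', hbond, hV, hE, hkeep, hatt, hlab⟩ := h
  have hlen := hH.2 e₁ he₁
  refine ⟨e', e₁, e₂, H.lab e₁, H.lab e₂, by simp [hE], ?_, ?_, hne, hlab ▸ hbond, hV.symm,
    ?_, fun e he => ?_, ?_, ?_, rfl, rfl⟩
  · rw [hE]; grind
  · rw [hE]; grind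
  · rw [hE]; ext x; simp only [Finset.mem_union, Finset.mem_sdiff, Finset.mem_insert,
      Finset.mem_singleton]; grind
  · have he : e ∈ H.E \ {e₁, e₂} := by rw [hE] at he; grind
    exact ⟨(hkeep e he).1.symm, (hkeep e he).2.symm⟩
  · rw [hatt, ← hlen, List.take_left]
  · rw [hatt, ← hlen, List.drop_left]

theorem BreakBond.bondingStep (h : BreakBond typ bond H' H) : BondingStep bond H H' := by
  obtain ⟨e', e₁, e₂, A₁, A₂, he', he₁, he₂, hne, hbond, hV, hE, hkeep, hatt₁, hatt₂,
    hlab₁, hlab₂⟩ := h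
  refine ⟨e₁, e₂, e', H'.lab e', by simp [hE], by simp [hE], hne, ?_, hlab₁ ▸ hlab₂ ▸ hbond,
    hV.symm, ?_, fun e he => ?_, by rw [hatt₁, hatt₂, List.take_append_drop], rfl⟩
  · rw [hE]; grind
  · rw [hE]; ext x; simp only [Finset.mem_union, Finset.mem_sdiff, Finset.mem_insert,
      Finset.mem_singleton]; grind
  · have he : e ∈ H'.E \ {e'} := by rw [hE] at he; grind
    exact ⟨(hkeep e he).1.symm, (hkeep e he).2.symm⟩

theorem BreaksTo.reflTransGen_bondingStep {l : List ℕ} {F : LabHypergraph Λ}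
    (h : BreaksTo typ bond H l F) : Relation.ReflTransGen (BondingStep bond) F H := by
  induction l generalizing H with
  | nil => exact h ▸ .refl
  | cons e l ih =>
    obtain ⟨H₁, e₁, e₂, hbreak, hrest⟩ := h
    exact (ih hrest).tail (BreakBond.bondingStep ⟨e, e₁, e₂, hbreak⟩)

end Bonding

namespace BondingGrammar

variable {Λ : Type} {G : BondingGrammar Λ} {H H' : LabHypergraph Λ}

def IsTerminalBondSet (G : BondingGrammar Λ) (H : LabHypergraph Λ) (l : List ℕ) : Prop :=
  l.Nodup ∧ (∀ e ∈ l, e ∈ H.E ∧ H.lab e ∈ G.T) ∧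
    ∃ F, BreaksTo G.typ G.bond H l F ∧ IsUnionOfCopies G.ZSet F

theorem isTerminalBondSet_nil (h : IsUnionOfCopies G.ZSet H) : G.IsTerminalBondSet H [] :=
  ⟨List.nodup_nil, by simp, H, rfl, h⟩

theorem IsTerminalBondSet.cons (hG : G.WellFormed) {l : List ℕ} {e' e₁ e₂ : ℕ}
    (hbreak : BreakBondAt G.typ G.bond H' H e' e₁ e₂) (hl : G.IsTerminalBondSet H l) :
    G.IsTerminalBondSet H' (e' :: l) := by
  obtain ⟨hnd, hmem, F, hF, hFU⟩ := hl
  obtain ⟨A₁, A₂, he', he₁, he₂, -, hbond, -, hE, hkeep, -, -, hlab₁, hlab₂⟩ := id hbreak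
  obtain ⟨hN₁, hN₂, hT, -⟩ := hG.2.2.1 _ _ _ hbond
  have hkept : ∀ e ∈ l, e ∈ H'.E \ {e'} := by
    intro e he
    have hne₁ : e ≠ e₁ := by
      rintro rfl; exact Set.disjoint_left.1 hG.1 (hlab₁ ▸ hN₁) (hmem e he).2
    have hne₂ : e ≠ e₂ := by
      rintro rfl; exact Set.disjoint_left.1 hG.1 (hlab₂ ▸ hN₂) (hmem e he).2
    have := (hmem e he).1
    rw [hE] at this; grind
  refine ⟨List.nodup_cons.2 ⟨fun h => ?_, hnd⟩, fun e he => ?_, F, ⟨H, e₁, e₂, hbreak, hF⟩, hFU⟩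
  · simpa using hkept e' h
  · rcases List.mem_cons.1 he with rfl | he
    · exact ⟨he', hT⟩
    · exact ⟨(Finset.mem_sdiff.1 (hkept e he)).1, (hkeep e (hkept e he)).2 ▸ (hmem e he).2⟩

theorem Generates.exists_isTerminalBondSet (hG : G.WellFormed) (h : G.Generates H) :
    ∃ l, G.IsTerminalBondSet H l := by
  obtain ⟨H₀, hU, hderiv⟩ := h
  have hwf : H₀.WellFormed G.typ := hU.wellFormed <| by
    rintro _ ⟨i, rfl⟩
    exact (hG.2.1 i).2
  have hadd : ∀ A₁ A₂ t, G.bond A₁ A₂ = some t → G.typ t = G.typ A₁ + G.typ A₂ :=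
    fun _ _ _ h ↦ (hG.2.2.1 _ _ _ h).2.2.2
  induction hderiv with
  | refl => exact ⟨[], isTerminalBondSet_nil hU⟩
  | tail hderiv hstep ih =>
    obtain ⟨l, hl⟩ := ih
    obtain ⟨e', e₁, e₂, hbreak⟩ := hstep.breakBond (hwf.reflTransGen_bondingStep hadd hderiv)
    exact ⟨e' :: l, hl.cons hG hbreak⟩

end BondingGrammar

/-- a hypergraph `H` is generated by a bonding grammar iff there
is a bond set for `H`: a set of hyperedges of `H` (here listed without
repetition) such that breaking all these bonds yields a hypergraph of the
form `m · Z`. -/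
theorem generates_iff_bond_set {Λ : Type}
    (G : BondingGrammar Λ) (hG : G.WellFormed) (H : LabHypergraph Λ) :
    G.Generates H ↔
      ∃ l : List ℕ, l.Nodup ∧ (∀ e ∈ l, e ∈ H.E) ∧
        ∃ F, BreaksTo G.typ G.bond H l F ∧ IsUnionOfCopies G.ZSet F := by
  constructor
  · intro h
    obtain ⟨l, hnd, hmem, hbreaks⟩ := h.exists_isTerminalBondSet hG
    exact ⟨l, hnd, fun e he => (hmem e he).1, hbreaks⟩
  · rintro ⟨l, -, -, F, hbreaks, hF⟩
    exact ⟨F, hF, hbreaks.reflTransGen_bondingStep⟩
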